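/- Let (R,V,W,S) be a Morita context. If the Morita context ring T is a prime ring, then R and S are prime rings, V is prime both as a left R-module and as a right S-module, and W is prime both as a left S-module and as a right R-module. -/

import Mathlib

/-! Multiplying a matrix with a single nonzero entry by an arbitrary `x` on one side and by another
such matrix on the other isolates one entry of `x` in a single corner; so each of the six claims is
primeness of the Morita context ring applied to a suitable pair of one-entry matrices. -/

/-- A Morita context `(R,V,W,S)`: rings `R`, `S`, an `(R,S)`-bimodule `V`,
an `(S,R)`-bimodule `W`, and context products `V × W → R`, `W × V → S`
making the `2 × 2` matrix set an associative ring. -/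
structure MoritaContext (R S V W : Type*) [Ring R] [Ring S]
    [AddCommGroup V] [AddCommGroup W] : Type _ where
  smulRV : R → V → V
  smulVS : V → S → V
  smulSW : S → W → W
  smulWR : W → R → W
  mulVW : V → W → R
  mulWV : W → V → S
  smulRV_add : ∀ r v v', smulRV r (v + v') = smulRV r v + smulRV r v'
  add_smulRV : ∀ r r' v, smulRV (r + r') v = smulRV r v + smulRV r' v
  mul_smulRV : ∀ r r' v, smulRV (r * r') v = smulRV r (smulRV r' v)
  one_smulRV : ∀ v, smulRV 1 v = v
  smulVS_add : ∀ v v' s, smulVS (v + v') s = smulVS v s + smulVS v' s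
  add_smulVS : ∀ v s s', smulVS v (s + s') = smulVS v s + smulVS v s'
  mul_smulVS : ∀ v s s', smulVS v (s * s') = smulVS (smulVS v s) s'
  one_smulVS : ∀ v, smulVS v 1 = v
  smul_assocRVS : ∀ r v s, smulVS (smulRV r v) s = smulRV r (smulVS v s)
  smulSW_add : ∀ s w w', smulSW s (w + w') = smulSW s w + smulSW s w'
  add_smulSW : ∀ s s' w, smulSW (s + s') w = smulSW s w + smulSW s' w
  mul_smulSW : ∀ s s' w, smulSW (s * s') w = smulSW s (smulSW s' w)
  one_smulSW : ∀ w, smulSW 1 w = w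
  smulWR_add : ∀ w w' r, smulWR (w + w') r = smulWR w r + smulWR w' r
  add_smulWR : ∀ w r r', smulWR w (r + r') = smulWR w r + smulWR w r'
  mul_smulWR : ∀ w r r', smulWR w (r * r') = smulWR (smulWR w r) r'
  one_smulWR : ∀ w, smulWR w 1 = w
  smul_assocSWR : ∀ s w r, smulWR (smulSW s w) r = smulSW s (smulWR w r)
  mulVW_add_left : ∀ v v' w, mulVW (v + v') w = mulVW v w + mulVW v' w
  mulVW_add_right : ∀ v w w', mulVW v (w + w') = mulVW v w + mulVW v w'
  mulWV_add_left : ∀ w w' v, mulWV (w + w') v = mulWV w v + mulWV w' v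
  mulWV_add_right : ∀ w v v', mulWV w (v + v') = mulWV w v + mulWV w v'
  mulVW_smulR : ∀ r v w, mulVW (smulRV r v) w = r * mulVW v w
  mulVW_smulS : ∀ v s w, mulVW (smulVS v s) w = mulVW v (smulSW s w)
  mulVW_smulWR : ∀ v w r, mulVW v (smulWR w r) = mulVW v w * r
  mulWV_smulS : ∀ s w v, mulWV (smulSW s w) v = s * mulWV w v
  mulWV_smulR : ∀ w r v, mulWV (smulWR w r) v = mulWV w (smulRV r v)
  mulWV_smulVS : ∀ w v s, mulWV w (smulVS v s) = mulWV w v * s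
  assocVWV : ∀ v w v', smulRV (mulVW v w) v' = smulVS v (mulWV w v')
  assocWVW : ∀ w v w', smulSW (mulWV w v) w' = smulWR w (mulVW v w')

namespace MoritaContext

variable {R S V W : Type*} [Ring R] [Ring S] [AddCommGroup V] [AddCommGroup W]
variable (M : MoritaContext R S V W)

/-- The underlying set of the Morita context ring: matrices `((r,v),(w,s))`. -/
def Mat (_ : MoritaContext R S V W) : Type _ := (R × V) × (W × S)

instance : AddCommGroup M.Mat := inferInstanceAs (AddCommGroup ((R × V) × (W × S)))


@[simp] lemma add_fst_fst (a b : M.Mat) : (a + b).1.1 = a.1.1 + b.1.1 := rfl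
@[simp] lemma add_fst_snd (a b : M.Mat) : (a + b).1.2 = a.1.2 + b.1.2 := rfl
@[simp] lemma add_snd_fst (a b : M.Mat) : (a + b).2.1 = a.2.1 + b.2.1 := rfl
@[simp] lemma add_snd_snd (a b : M.Mat) : (a + b).2.2 = a.2.2 + b.2.2 := rfl
@[simp] lemma neg_fst_fst (a : M.Mat) : (-a).1.1 = -a.1.1 := rfl
@[simp] lemma neg_fst_snd (a : M.Mat) : (-a).1.2 = -a.1.2 := rfl
@[simp] lemma neg_snd_fst (a : M.Mat) : (-a).2.1 = -a.2.1 := rfl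
@[simp] lemma neg_snd_snd (a : M.Mat) : (-a).2.2 = -a.2.2 := rfl
@[simp] lemma zero_fst_fst : (0 : M.Mat).1.1 = 0 := rfl
@[simp] lemma zero_fst_snd : (0 : M.Mat).1.2 = 0 := rfl
@[simp] lemma zero_snd_fst : (0 : M.Mat).2.1 = 0 := rfl
@[simp] lemma zero_snd_snd : (0 : M.Mat).2.2 = 0 := rfl

/-- The matrix `((r,v),(w,s))` as an element of the Morita context ring. -/
def mat (r : R) (v : V) (w : W) (s : S) : M.Mat := ((r, v), (w, s))

lemma smulRV_zero (r : R) : M.smulRV r 0 = 0 := by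
  have h := M.smulRV_add r 0 0
  rw [add_zero] at h
  exact (add_eq_left.mp h.symm)

lemma zero_smulRV (v : V) : M.smulRV 0 v = 0 := by
  have h := M.add_smulRV 0 0 v
  rw [add_zero] at h
  exact (add_eq_left.mp h.symm)

lemma smulVS_zero (v : V) : M.smulVS v 0 = 0 := by
  have h := M.add_smulVS v 0 0
  rw [add_zero] at h
  exact (add_eq_left.mp h.symm)

lemma zero_smulVS (s : S) : M.smulVS 0 s = 0 := by
  have h := M.smulVS_add 0 0 s
  rw [add_zero] at h
  exact (add_eq_left.mp h.symm)

lemma smulSW_zero (s : S) : M.smulSW s 0 = 0 := by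
  have h := M.smulSW_add s 0 0
  rw [add_zero] at h
  exact (add_eq_left.mp h.symm)

lemma zero_smulSW (w : W) : M.smulSW 0 w = 0 := by
  have h := M.add_smulSW 0 0 w
  rw [add_zero] at h
  exact (add_eq_left.mp h.symm)

lemma smulWR_zero (w : W) : M.smulWR w 0 = 0 := by
  have h := M.add_smulWR w 0 0
  rw [add_zero] at h
  exact (add_eq_left.mp h.symm)

lemma zero_smulWR (r : R) : M.smulWR 0 r = 0 := by
  have h := M.smulWR_add 0 0 r
  rw [add_zero] at h
  exact (add_eq_left.mp h.symm)

lemma mulVW_zero (v : V) : M.mulVW v 0 = 0 := by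
  have h := M.mulVW_add_right v 0 0
  rw [add_zero] at h
  exact (add_eq_left.mp h.symm)

lemma zero_mulVW (w : W) : M.mulVW 0 w = 0 := by
  have h := M.mulVW_add_left 0 0 w
  rw [add_zero] at h
  exact (add_eq_left.mp h.symm)

lemma mulWV_zero (w : W) : M.mulWV w 0 = 0 := by
  have h := M.mulWV_add_right w 0 0
  rw [add_zero] at h
  exact (add_eq_left.mp h.symm)

lemma zero_mulWV (v : V) : M.mulWV 0 v = 0 := by
  have h := M.mulWV_add_left 0 0 v
  rw [add_zero] at h
  exact (add_eq_left.mp h.symm)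


lemma mat_ext {a b : M.Mat} (h1 : a.1.1 = b.1.1) (h2 : a.1.2 = b.1.2)
    (h3 : a.2.1 = b.2.1) (h4 : a.2.2 = b.2.2) : a = b :=
  Prod.ext (Prod.ext h1 h2) (Prod.ext h3 h4)

/-- Multiplication in the Morita context ring. -/
def matMul (a b : M.Mat) : M.Mat :=
  ((a.1.1 * b.1.1 + M.mulVW a.1.2 b.2.1, M.smulRV a.1.1 b.1.2 + M.smulVS a.1.2 b.2.2),
   (M.smulWR a.2.1 b.1.1 + M.smulSW a.2.2 b.2.1, M.mulWV a.2.1 b.1.2 + a.2.2 * b.2.2))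

/-- The ring structure on the Morita context matrices. -/
instance : Ring M.Mat where
  __ := (inferInstance : AddCommGroup M.Mat)
  mul := M.matMul
  one := ((1, 0), (0, 1))
  left_distrib a b c := by
    show M.matMul a (b + c) = M.matMul a b + M.matMul a c
    refine M.mat_ext ?_ ?_ ?_ ?_ <;>
      (try simp only [add_fst_fst, add_fst_snd, add_snd_fst, add_snd_snd]) <;>
      simp [matMul, M.smulRV_add, M.add_smulVS, M.smulSW_add, M.add_smulWR,
        M.mulVW_add_right, M.mulWV_add_right, mul_add] <;> abel
  right_distrib a b c := by
    show M.matMul (a + b) c = M.matMul a c + M.matMul b c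
    refine M.mat_ext ?_ ?_ ?_ ?_ <;>
      (try simp only [add_fst_fst, add_fst_snd, add_snd_fst, add_snd_snd]) <;>
      simp [matMul, M.add_smulRV, M.smulVS_add, M.add_smulSW, M.smulWR_add,
        M.mulVW_add_left, M.mulWV_add_left, add_mul] <;> abel
  zero_mul a := by
    show M.matMul 0 a = 0
    simp [matMul, M.zero_smulRV, M.zero_smulVS, M.zero_smulSW, M.zero_smulWR,
      M.zero_mulVW, M.zero_mulWV] <;> rfl
  mul_zero a := by
    show M.matMul a 0 = 0
    simp [matMul, M.smulRV_zero, M.smulVS_zero, M.smulSW_zero, M.smulWR_zero,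
      M.mulVW_zero, M.mulWV_zero] <;> rfl
  mul_assoc a b c := by
    show M.matMul (M.matMul a b) c = M.matMul a (M.matMul b c)
    refine M.mat_ext ?_ ?_ ?_ ?_ <;>
      simp [matMul, M.smulRV_add, M.add_smulRV, M.mul_smulRV, M.smulVS_add, M.add_smulVS,
        M.mul_smulVS, M.smul_assocRVS, M.smulSW_add, M.add_smulSW, M.mul_smulSW,
        M.smulWR_add, M.add_smulWR, M.mul_smulWR, M.smul_assocSWR,
        M.mulVW_add_left, M.mulVW_add_right, M.mulWV_add_left, M.mulWV_add_right,
        M.mulVW_smulR, M.mulVW_smulS, M.mulVW_smulWR, M.mulWV_smulS, M.mulWV_smulR,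
        M.mulWV_smulVS, M.assocVWV, M.assocWVW, mul_add, add_mul, mul_assoc] <;> abel
  one_mul a := by
    show M.matMul ((1, 0), (0, 1)) a = a
    simp [matMul, M.one_smulRV, M.one_smulSW, M.zero_smulVS, M.zero_smulWR,
      M.zero_mulVW, M.zero_mulWV] <;> rfl
  mul_one a := by
    show M.matMul a ((1, 0), (0, 1)) = a
    simp [matMul, M.one_smulVS, M.one_smulWR, M.smulRV_zero, M.smulSW_zero,
      M.mulVW_zero, M.mulWV_zero] <;> rfl

/-- The "rectangular" subset `(I, V₁, W₁, J)` of the Morita context ring. -/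
def rect (I : Set R) (V₁ : Set V) (W₁ : Set W) (J : Set S) : Set M.Mat :=
  {t | t.1.1 ∈ I ∧ t.1.2 ∈ V₁ ∧ t.2.1 ∈ W₁ ∧ t.2.2 ∈ J}

end MoritaContext

/-- A subset of a ring is a right ideal. -/
def IsRightIdealSet {A : Type*} [Ring A] (U : Set A) : Prop :=
  (0 : A) ∈ U ∧ (∀ a ∈ U, ∀ b ∈ U, a + b ∈ U) ∧ (∀ a ∈ U, -a ∈ U) ∧
    ∀ a ∈ U, ∀ t : A, a * t ∈ U

/-- A subset of a ring is a two-sided ideal. -/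
def IsIdealSet {A : Type*} [Ring A] (U : Set A) : Prop :=
  (0 : A) ∈ U ∧ (∀ a ∈ U, ∀ b ∈ U, a + b ∈ U) ∧ (∀ a ∈ U, -a ∈ U) ∧
    (∀ a ∈ U, ∀ t : A, a * t ∈ U) ∧ ∀ a ∈ U, ∀ t : A, t * a ∈ U

/-- A proper two-sided ideal `U` is prime if `aAb ⊆ U` implies `a ∈ U` or `b ∈ U`. -/
def IsPrimeIdealSet {A : Type*} [Ring A] (U : Set A) : Prop :=
  IsIdealSet U ∧ U ≠ Set.univ ∧ ∀ a b : A, (∀ x : A, a * x * b ∈ U) → a ∈ U ∨ b ∈ U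

/-- A proper two-sided ideal `U` is semiprime if `aAa ⊆ U` implies `a ∈ U`. -/
def IsSemiprimeIdealSet {A : Type*} [Ring A] (U : Set A) : Prop :=
  IsIdealSet U ∧ U ≠ Set.univ ∧ ∀ a : A, (∀ x : A, a * x * a ∈ U) → a ∈ U

/-- A proper right ideal `U` is prime if `aAb ⊆ U` implies `a ∈ U` or `b ∈ U`. -/
def IsPrimeRightIdealSet {A : Type*} [Ring A] (U : Set A) : Prop :=
  IsRightIdealSet U ∧ U ≠ Set.univ ∧ ∀ a b : A, (∀ x : A, a * x * b ∈ U) → a ∈ U ∨ b ∈ U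

/-- The prime radical of a ring: the intersection of all its prime ideals. -/
def primeRadicalSet (A : Type*) [Ring A] : Set A := ⋂₀ {U | IsPrimeIdealSet U}

/-- A ring `A` is prime if `aAb = 0` implies `a = 0` or `b = 0`. -/
def IsPrimeRing (A : Type*) [Ring A] : Prop :=
  ∀ a b : A, (∀ x : A, a * x * b = 0) → a = 0 ∨ b = 0

/-- A ring `A` is semiprime if `aAa = 0` implies `a = 0`. -/
def IsSemiprimeRing (A : Type*) [Ring A] : Prop :=
  ∀ a : A, (∀ x : A, a * x * a = 0) → a = 0

/-- The Morita context `(A,A,A,A)` over a commutative ring with all products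
given by multiplication in `A`. -/
def MoritaContext.ofComm (A : Type*) [CommRing A] : MoritaContext A A A A := by
  refine ⟨(· * ·), (· * ·), (· * ·), (· * ·), (· * ·), (· * ·), ?_, ?_, ?_, ?_, ?_, ?_, ?_, ?_, ?_, ?_, ?_, ?_, ?_, ?_, ?_, ?_, ?_, ?_, ?_, ?_, ?_, ?_, ?_, ?_, ?_, ?_, ?_, ?_, ?_, ?_⟩ <;>
    intros <;> ring

/-- The Morita context `(A, I, J, A)` over a commutative ring `A` with ideals
`I`, `J`, all products given by multiplication in `A`. -/
def MoritaContext.ofIdeals (A : Type*) [CommRing A] (I J : Ideal A) :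
    MoritaContext A A I J := by
  refine ⟨fun r v => ⟨r * v.1, I.mul_mem_left r v.2⟩,
    fun v s => ⟨v.1 * s, I.mul_mem_right s v.2⟩,
    fun s w => ⟨s * w.1, J.mul_mem_left s w.2⟩,
    fun w r => ⟨w.1 * r, J.mul_mem_right r w.2⟩,
    fun v w => v.1 * w.1, fun w v => w.1 * v.1, ?_, ?_, ?_, ?_, ?_, ?_, ?_, ?_, ?_, ?_, ?_, ?_, ?_, ?_, ?_, ?_, ?_, ?_, ?_, ?_, ?_, ?_, ?_, ?_, ?_, ?_, ?_, ?_, ?_, ?_⟩ <;>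
    intros <;> first
      | (apply Subtype.ext; push_cast; ring)
      | (push_cast; ring)

variable {R S V W : Type*} [Ring R] [Ring S] [AddCommGroup V] [AddCommGroup W]

namespace MoritaContext

variable (M : MoritaContext R S V W)

lemma mat_eta (x : M.Mat) : M.mat x.1.1 x.1.2 x.2.1 x.2.2 = x := rfl

lemma mat_mul_mat (r r' : R) (v v' : V) (w w' : W) (s s' : S) :
    M.mat r v w s * M.mat r' v' w' s' =
      M.mat (r * r' + M.mulVW v w') (M.smulRV r v' + M.smulVS v s')
        (M.smulWR w r' + M.smulSW s w') (M.mulWV w v' + s * s') := rfl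

lemma mat_eq_zero_iff (r : R) (v : V) (w : W) (s : S) :
    M.mat r v w s = 0 ↔ r = 0 ∧ v = 0 ∧ w = 0 ∧ s = 0 := by
  show ((r, v), (w, s)) = ((0, 0), (0, 0)) ↔ _
  simp only [Prod.mk.injEq, and_assoc]

attribute [local simp] smulRV_zero zero_smulRV smulVS_zero zero_smulVS smulSW_zero zero_smulSW
  smulWR_zero zero_smulWR mulVW_zero zero_mulVW mulWV_zero zero_mulWV

lemma mat_R_mul_mul_mat_R (r r' : R) (x : M.Mat) :
    M.mat r 0 0 0 * x * M.mat r' 0 0 0 = M.mat (r * x.1.1 * r') 0 0 0 := by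
  conv_lhs => rw [← M.mat_eta x, mat_mul_mat, mat_mul_mat]
  simp

lemma mat_S_mul_mul_mat_S (s s' : S) (x : M.Mat) :
    M.mat 0 0 0 s * x * M.mat 0 0 0 s' = M.mat 0 0 0 (s * x.2.2 * s') := by
  conv_lhs => rw [← M.mat_eta x, mat_mul_mat, mat_mul_mat]
  simp

lemma mat_R_mul_mul_mat_V (r : R) (v : V) (x : M.Mat) :
    M.mat r 0 0 0 * x * M.mat 0 v 0 0 = M.mat 0 (M.smulRV (r * x.1.1) v) 0 0 := by
  conv_lhs => rw [← M.mat_eta x, mat_mul_mat, mat_mul_mat]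
  simp [mul_smulRV]

lemma mat_V_mul_mul_mat_S (v : V) (s : S) (x : M.Mat) :
    M.mat 0 v 0 0 * x * M.mat 0 0 0 s = M.mat 0 (M.smulVS (M.smulVS v x.2.2) s) 0 0 := by
  conv_lhs => rw [← M.mat_eta x, mat_mul_mat, mat_mul_mat]
  simp

lemma mat_S_mul_mul_mat_W (s : S) (w : W) (x : M.Mat) :
    M.mat 0 0 0 s * x * M.mat 0 0 w 0 = M.mat 0 0 (M.smulSW (s * x.2.2) w) 0 := by
  conv_lhs => rw [← M.mat_eta x, mat_mul_mat, mat_mul_mat]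
  simp [mul_smulSW]

lemma mat_W_mul_mul_mat_R (w : W) (r : R) (x : M.Mat) :
    M.mat 0 0 w 0 * x * M.mat r 0 0 0 = M.mat 0 0 (M.smulWR (M.smulWR w x.1.1) r) 0 := by
  conv_lhs => rw [← M.mat_eta x, mat_mul_mat, mat_mul_mat]
  simp

variable {M}

lemma isPrimeRing_left (h : IsPrimeRing M.Mat) : IsPrimeRing R := by
  intro a b hab
  simpa [mat_eq_zero_iff] using h (M.mat a 0 0 0) (M.mat b 0 0 0) fun x => by
    rw [mat_R_mul_mul_mat_R, hab]; rfl

lemma isPrimeRing_right (h : IsPrimeRing M.Mat) : IsPrimeRing S := by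
  intro a b hab
  simpa [mat_eq_zero_iff] using h (M.mat 0 0 0 a) (M.mat 0 0 0 b) fun x => by
    rw [mat_S_mul_mul_mat_S, hab]; rfl

lemma prime_smulRV (h : IsPrimeRing M.Mat) (r : R) (v : V)
    (hrv : ∀ x : R, M.smulRV (r * x) v = 0) : (∀ v' : V, M.smulRV r v' = 0) ∨ v = 0 := by
  have := h (M.mat r 0 0 0) (M.mat 0 v 0 0) fun x => by rw [mat_R_mul_mul_mat_V, hrv]; rfl
  simp only [mat_eq_zero_iff, and_true, true_and] at this
  exact this.imp_left fun (hr : r = 0) v' => hr ▸ M.zero_smulRV v'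

lemma prime_smulVS (h : IsPrimeRing M.Mat) (s : S) (v : V)
    (hvs : ∀ x : S, M.smulVS (M.smulVS v x) s = 0) : v = 0 ∨ ∀ v' : V, M.smulVS v' s = 0 := by
  have := h (M.mat 0 v 0 0) (M.mat 0 0 0 s) fun x => by rw [mat_V_mul_mul_mat_S, hvs]; rfl
  simp only [mat_eq_zero_iff, and_true, true_and] at this
  exact this.imp_right fun (hs : s = 0) v' => hs ▸ M.smulVS_zero v'

lemma prime_smulSW (h : IsPrimeRing M.Mat) (s : S) (w : W)
    (hsw : ∀ x : S, M.smulSW (s * x) w = 0) : (∀ w' : W, M.smulSW s w' = 0) ∨ w = 0 := by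
  have := h (M.mat 0 0 0 s) (M.mat 0 0 w 0) fun x => by rw [mat_S_mul_mul_mat_W, hsw]; rfl
  simp only [mat_eq_zero_iff, and_true, true_and] at this
  exact this.imp_left fun (hs : s = 0) w' => hs ▸ M.zero_smulSW w'

lemma prime_smulWR (h : IsPrimeRing M.Mat) (r : R) (w : W)
    (hwr : ∀ x : R, M.smulWR (M.smulWR w x) r = 0) : w = 0 ∨ ∀ w' : W, M.smulWR w' r = 0 := by
  have := h (M.mat 0 0 w 0) (M.mat r 0 0 0) fun x => by rw [mat_W_mul_mul_mat_R, hwr]; rfl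
  simp only [mat_eq_zero_iff, and_true, true_and] at this
  exact this.imp_right fun (hr : r = 0) w' => hr ▸ M.smulWR_zero w'

end MoritaContext

/-- Theorem 2.13, (1) ⇒ (2): if the Morita context ring is prime, then `R` and
`S` are prime rings, `V` is prime as a left `R`-module and as a right
`S`-module, and `W` is prime as a left `S`-module and as a right `R`-module. -/
theorem stmt16 (M : MoritaContext R S V W) (h : IsPrimeRing M.Mat) :
    IsPrimeRing R ∧ IsPrimeRing S ∧
    (∀ (r : R) (v : V), (∀ x : R, M.smulRV (r * x) v = 0) →
      (∀ v' : V, M.smulRV r v' = 0) ∨ v = 0) ∧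
    (∀ (s : S) (v : V), (∀ x : S, M.smulVS (M.smulVS v x) s = 0) →
      v = 0 ∨ ∀ v' : V, M.smulVS v' s = 0) ∧
    (∀ (s : S) (w : W), (∀ x : S, M.smulSW (s * x) w = 0) →
      (∀ w' : W, M.smulSW s w' = 0) ∨ w = 0) ∧
    (∀ (r : R) (w : W), (∀ x : R, M.smulWR (M.smulWR w x) r = 0) →
      w = 0 ∨ ∀ w' : W, M.smulWR w' r = 0) :=
  ⟨MoritaContext.isPrimeRing_left h, MoritaContext.isPrimeRing_right h,
    MoritaContext.prime_smulRV h, MoritaContext.prime_smulVS h,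
    MoritaContext.prime_smulSW h, MoritaContext.prime_smulWR h⟩
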